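/- arXiv:1810.09928 — 6 statements merged into one kernel-verified Lean document; each statement's English description precedes it below -/
import Mathlib

section
/- For a cubic Hamiltonian vector field f = J∇H on ℝ^n, the function H̃(x,ε) = H(x) + (ε/3)(∇H(x))^T (I − (ε/2)f'(x))^{-1} f(x) is an integral of motion of the Kahan map: H̃(Φ_f(x,ε), ε) = H̃(x,ε) wherever both sides are defined. -/
/-!
Put `u = (I - (ε/2) f'(x))⁻¹ f(x)`, `y = x + ε u` and let `m` be the midpoint of `x` and `y`.
Since `∇H` is quadratic and `H` is cubic, the trapezoidal rule, the Taylor expansion about `x`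
and Simpson's rule along the segment `[x, y]` are all exact.
The trapezoidal rule for `f = J∇H` gives `(I + (ε/2) f'(y)) u = f(y)`; as `f' = J ∇²H` with
`∇²H` symmetric and `J` skew, this turns the correction term of `H̃(y)` into `-∇H(y)ᵀu`.
Expanding `∇H(m)` about `x` shows `u = J w` with `w = 2∇H(m) - (∇H(x) + ∇H(y))/2`, so `wᵀu = 0`.
Simpson's rule `H(y) - H(x) = (ε/6)(∇H(x) + 4∇H(m) + ∇H(y))ᵀu` then gives
`H̃(y) - H̃(x) = (ε/3) wᵀu = 0`.
-/

open Matrix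

namespace Polynomial

variable {K : Type*} [Field K] [CharZero K] (q : K[X])

theorem trapezoid_rule (hq : q.natDegree ≤ 2) :
    q.eval 1 - q.eval 0 = (q.derivative.eval 0 + q.derivative.eval 1) / 2 := by
  have hq' := (natDegree_derivative_le q).trans (Nat.sub_le_sub_right hq 1)
  rw [eval_eq_sum_range' (Nat.lt_succ_of_le hq), eval_eq_sum_range' (Nat.lt_succ_of_le hq),
    eval_eq_sum_range' (Nat.lt_succ_of_le hq'), eval_eq_sum_range' (Nat.lt_succ_of_le hq')]
  simp only [Finset.sum_range_succ, Finset.sum_range_zero, coeff_derivative]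
  norm_num
  ring

theorem four_mul_eval_half (hq : q.natDegree ≤ 2) :
    4 * q.eval (1 / 2) = 3 * q.eval 0 + q.eval 1 + q.derivative.eval 0 := by
  have hq' := (natDegree_derivative_le q).trans (Nat.sub_le_sub_right hq 1)
  rw [eval_eq_sum_range' (Nat.lt_succ_of_le hq), eval_eq_sum_range' (Nat.lt_succ_of_le hq),
    eval_eq_sum_range' (Nat.lt_succ_of_le hq), eval_eq_sum_range' (Nat.lt_succ_of_le hq')]
  simp only [Finset.sum_range_succ, Finset.sum_range_zero, coeff_derivative]
  norm_num
  ring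

theorem simpson_rule (hq : q.natDegree ≤ 3) :
    q.eval 1 - q.eval 0 =
      (q.derivative.eval 0 + 4 * q.derivative.eval (1 / 2) + q.derivative.eval 1) / 6 := by
  have hq' := (natDegree_derivative_le q).trans (Nat.sub_le_sub_right hq 1)
  rw [eval_eq_sum_range' (Nat.lt_succ_of_le hq), eval_eq_sum_range' (Nat.lt_succ_of_le hq),
    eval_eq_sum_range' (Nat.lt_succ_of_le hq'), eval_eq_sum_range' (Nat.lt_succ_of_le hq'),
    eval_eq_sum_range' (Nat.lt_succ_of_le hq')]
  simp only [Finset.sum_range_succ, Finset.sum_range_zero, coeff_derivative]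
  norm_num
  ring

end Polynomial

namespace MvPolynomial

variable {σ R : Type*}

theorem pderiv_pderiv_comm [CommRing R] (i j : σ) (p : MvPolynomial σ R) :
    pderiv i (pderiv j p) = pderiv j (pderiv i p) := by
  classical
  have h : ⁅pderiv i, pderiv j⁆ = (0 : Derivation R (MvPolynomial σ R) (MvPolynomial σ R)) :=
    derivation_ext fun k => by
      rw [Derivation.commutator_apply, pderiv_X, pderiv_X, Pi.single_apply, Pi.single_apply]
      split_ifs <;> simp
  rw [← sub_eq_zero, ← Derivation.commutator_apply, h, Derivation.zero_apply]

theorem totalDegree_pderiv_le [CommSemiring R] (i : σ) (p : MvPolynomial σ R) :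
    (pderiv i p).totalDegree ≤ p.totalDegree - 1 := by
  classical
  refine Finset.sup_le fun m hm => ?_
  have hm' : m + Finsupp.single i 1 ∈ p.support := by
    rw [mem_support_iff, coeff_pderiv] at hm
    exact mem_support_iff.2 (left_ne_zero_of_mul hm)
  have := le_totalDegree hm'
  rw [Finsupp.sum_add_index' (fun _ => rfl) (fun _ _ _ => rfl), Finsupp.sum_single_index rfl]
    at this
  omega

noncomputable def grad [CommSemiring R] (p : MvPolynomial σ R) (x : σ → R) : σ → R :=
  fun j => eval x (pderiv j p)

noncomputable def hessian [CommSemiring R] (p : MvPolynomial σ R) (x : σ → R) : Matrix σ σ R :=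
  Matrix.of fun i => grad (pderiv i p) x

theorem hessian_mulVec_apply [CommSemiring R] [Fintype σ] (p : MvPolynomial σ R) (x v : σ → R)
    (i : σ) : (hessian p x *ᵥ v) i = grad (pderiv i p) x ⬝ᵥ v :=
  rfl

theorem hessian_transpose [CommRing R] (p : MvPolynomial σ R) (x : σ → R) :
    (hessian p x)ᵀ = hessian p x := by
  ext i j
  simp [hessian, grad, pderiv_pderiv_comm i j]

theorem natDegree_aeval_le_totalDegree [CommSemiring R] (F : σ → Polynomial R)
    (hF : ∀ i, (F i).natDegree ≤ 1) (p : MvPolynomial σ R) :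
    (aeval F p).natDegree ≤ p.totalDegree := by
  rw [aeval_def, eval₂_eq]
  refine Polynomial.natDegree_sum_le_of_forall_le _ _ fun s hs => ?_
  calc _ ≤ (∏ i ∈ s.support, F i ^ s i).natDegree := Polynomial.natDegree_C_mul_le _ _
    _ ≤ ∑ i ∈ s.support, (F i ^ s i).natDegree := Polynomial.natDegree_prod_le _ _
    _ ≤ ∑ i ∈ s.support, s i :=
      Finset.sum_le_sum fun i _ => (Polynomial.natDegree_pow_le_of_le _ (hF i)).trans_eq (mul_one _)
    _ ≤ p.totalDegree := le_totalDegree hs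

noncomputable def restrictLine [CommRing R] (x y : σ → R) (p : MvPolynomial σ R) :
    Polynomial R :=
  aeval (fun i => Polynomial.C (x i) + Polynomial.C (y i - x i) * Polynomial.X) p

theorem eval_restrictLine [CommRing R] (x y : σ → R) (p : MvPolynomial σ R) (t : R) :
    (restrictLine x y p).eval t = eval (AffineMap.lineMap x y t) p := by
  rw [restrictLine, ← Polynomial.coe_aeval_eq_eval, ← AlgHom.comp_apply, comp_aeval,
    ← aeval_eq_eval]
  congr 2
  funext i
  simp only [Polynomial.coe_aeval_eq_eval, Polynomial.eval_add, Polynomial.eval_C,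
    Polynomial.eval_mul, Polynomial.eval_X, AffineMap.lineMap_apply_module', Pi.add_apply,
    Pi.smul_apply, Pi.sub_apply, smul_eq_mul]
  ring

theorem natDegree_restrictLine_le [CommRing R] (x y : σ → R) (p : MvPolynomial σ R) :
    (restrictLine x y p).natDegree ≤ p.totalDegree :=
  natDegree_aeval_le_totalDegree _ (fun i => by
    refine (Polynomial.natDegree_add_le _ _).trans (max_le ?_ ?_)
    · simp
    · exact (Polynomial.natDegree_C_mul_le _ _).trans Polynomial.natDegree_X_le) p

section Calculus

variable {𝕜 : Type*} [NontriviallyNormedField 𝕜] [Fintype σ]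

theorem hasFDerivAt_eval (p : MvPolynomial σ 𝕜) (x : σ → 𝕜) :
    HasFDerivAt (fun y => eval y p)
      (∑ j, grad p x j • ContinuousLinearMap.proj j : (σ → 𝕜) →L[𝕜] 𝕜) x := by
  classical
  induction p using MvPolynomial.induction_on with
  | C a =>
    simp only [eval_C]
    refine (hasFDerivAt_const (𝕜 := 𝕜) a x).congr_fderiv ?_
    ext1 v
    simp [grad]
  | add p q hp hq =>
    simp only [eval_add]
    refine (hp.add hq).congr_fderiv ?_
    ext1 v
    simp [grad, add_mul, Finset.sum_add_distrib]
  | mul_X p i hp =>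
    simp only [eval_mul, eval_X]
    refine (hp.mul (hasFDerivAt_apply i x)).congr_fderiv ?_
    ext1 v
    simp [grad, pderiv_X, Pi.single_apply, apply_ite, add_mul, Finset.sum_add_distrib,
      Finset.mul_sum, mul_assoc]

theorem fderiv_eval_apply (p : MvPolynomial σ 𝕜) (x v : σ → 𝕜) :
    fderiv 𝕜 (fun y => eval y p) x v = grad p x ⬝ᵥ v := by
  simp [(hasFDerivAt_eval p x).fderiv, dotProduct, mul_comm]

theorem fderiv_mulVec_grad_apply {ι : Type*} [Fintype ι] (J : Matrix ι σ 𝕜)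
    (p : MvPolynomial σ 𝕜) (x v : σ → 𝕜) :
    fderiv 𝕜 (fun y => J *ᵥ grad p y) x v = J *ᵥ (hessian p x *ᵥ v) := by
  have hgrad : HasFDerivAt (grad p)
      (ContinuousLinearMap.pi fun i => ∑ j, hessian p x i j • ContinuousLinearMap.proj j) x :=
    hasFDerivAt_pi.2 fun i => hasFDerivAt_eval (pderiv i p) x
  have hJ : HasFDerivAt (fun y => J *ᵥ y)
      (ContinuousLinearMap.pi fun i => ∑ k, J i k • ContinuousLinearMap.proj k :
        (σ → 𝕜) →L[𝕜] ι → 𝕜) (grad p x) := by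
    refine ContinuousLinearMap.hasFDerivAt _ |>.congr_of_eventuallyEq (.of_forall fun y => ?_)
    ext i
    simp [mulVec, dotProduct]
  rw [show (fun y => J *ᵥ grad p y) = (J *ᵥ ·) ∘ grad p from rfl, (hJ.comp x hgrad).fderiv]
  ext i
  simp [mulVec, dotProduct, mul_comm]

theorem derivative_eval_restrictLine (x y : σ → 𝕜) (p : MvPolynomial σ 𝕜) (t : 𝕜) :
    (restrictLine x y p).derivative.eval t = grad p (AffineMap.lineMap x y t) ⬝ᵥ (y - x) := by
  have h := (hasFDerivAt_eval p _).comp_hasDerivAt t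
    (AffineMap.hasDerivAt_lineMap (a := x) (b := y))
  rw [Function.comp_def, ← _root_.funext (eval_restrictLine x y p)] at h
  refine ((restrictLine x y p).hasDerivAt t).unique (h.congr_deriv ?_)
  simp [dotProduct, mul_comm]

end Calculus

section Quadrature

variable {𝕜 : Type*} [RCLike 𝕜] [Fintype σ] {p : MvPolynomial σ 𝕜} (x y : σ → 𝕜)

theorem trapezoid_rule (hp : p.totalDegree ≤ 2) :
    eval y p - eval x p = (grad p x + grad p y) ⬝ᵥ (y - x) / 2 := by
  have := Polynomial.trapezoid_rule _ ((natDegree_restrictLine_le x y p).trans hp)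
  simpa only [eval_restrictLine, derivative_eval_restrictLine, AffineMap.lineMap_apply_zero,
    AffineMap.lineMap_apply_one, add_dotProduct] using this

theorem four_mul_eval_midpoint (hp : p.totalDegree ≤ 2) :
    4 * eval (midpoint 𝕜 x y) p = 3 * eval x p + eval y p + grad p x ⬝ᵥ (y - x) := by
  have := Polynomial.four_mul_eval_half _ ((natDegree_restrictLine_le x y p).trans hp)
  simpa only [eval_restrictLine, derivative_eval_restrictLine, AffineMap.lineMap_apply_zero,
    AffineMap.lineMap_apply_one, midpoint, invOf_eq_inv, one_div] using this

theorem simpson_rule (hp : p.totalDegree ≤ 3) :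
    eval y p - eval x p =
      (grad p x + (4 : 𝕜) • grad p (midpoint 𝕜 x y) + grad p y) ⬝ᵥ (y - x) / 6 := by
  have := Polynomial.simpson_rule _ ((natDegree_restrictLine_le x y p).trans hp)
  simpa only [eval_restrictLine, derivative_eval_restrictLine, AffineMap.lineMap_apply_zero,
    AffineMap.lineMap_apply_one, midpoint, invOf_eq_inv, one_div, add_dotProduct,
    smul_dotProduct, smul_eq_mul] using this

theorem grad_sub_grad (hp : p.totalDegree ≤ 3) :
    grad p y - grad p x = (1 / 2 : 𝕜) • ((hessian p x + hessian p y) *ᵥ (y - x)) := by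
  funext i
  have := trapezoid_rule x y ((totalDegree_pderiv_le i p).trans (by omega))
  rw [Pi.sub_apply, Pi.smul_apply, add_mulVec, Pi.add_apply, smul_eq_mul, hessian_mulVec_apply,
    hessian_mulVec_apply]
  exact this.trans (by rw [add_dotProduct]; ring)

theorem four_smul_grad_midpoint (hp : p.totalDegree ≤ 3) :
    (4 : 𝕜) • grad p (midpoint 𝕜 x y) =
      (3 : 𝕜) • grad p x + grad p y + hessian p x *ᵥ (y - x) := by
  funext i
  simpa only [Pi.add_apply, Pi.smul_apply, smul_eq_mul, hessian_mulVec_apply, grad] using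
    four_mul_eval_midpoint x y (p := pderiv i p) ((totalDegree_pderiv_le i p).trans (by omega))

end Quadrature

end MvPolynomial

namespace Matrix

variable {ι α : Type*} [Fintype ι] [CommRing α] {J S : Matrix ι ι α}

theorem det_one_add_smul_mul_of_skew [DecidableEq ι] (hJ : Jᵀ = -J) (hS : Sᵀ = S) (c : α) :
    det (1 + c • (J * S)) = det (1 - c • (J * S)) := by
  calc det (1 + c • (J * S)) = det (1 + S * (c • J)) := by
        rw [← smul_mul, det_one_add_mul_comm]
    _ = det (1 + S * (c • J))ᵀ := (det_transpose _).symm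
    _ = det (1 - c • (J * S)) := by
        rw [transpose_add, transpose_one, transpose_mul, transpose_smul, hJ, hS, smul_neg,
          Matrix.neg_mul, ← sub_eq_add_neg, smul_mul]

theorem dotProduct_mulVec_self_of_skew [NoZeroDivisors α] [CharZero α] (hJ : Jᵀ = -J)
    (v : ι → α) : v ⬝ᵥ (J *ᵥ v) = 0 := by
  refine self_eq_neg.mp ?_
  conv_lhs => rw [dotProduct_mulVec, ← mulVec_transpose, hJ, neg_mulVec, neg_dotProduct,
    dotProduct_comm]

theorem dotProduct_inv_one_sub_smul_mul_mulVec [DecidableEq ι] (hJ : Jᵀ = -J) (hS : Sᵀ = S)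
    {c : α} {u v : ι → α} (hA : IsUnit (1 - c • (J * S)).det)
    (hu : (1 + c • (J * S)) *ᵥ u = J *ᵥ v) :
    v ⬝ᵥ ((1 - c • (J * S))⁻¹ *ᵥ (J *ᵥ v)) = -(v ⬝ᵥ u) := by
  set A := 1 - c • (J * S)
  have hBJ : (1 + c • (J * S)) * J = J * Aᵀ := by
    simp only [A, transpose_sub, transpose_one, transpose_smul, transpose_mul, hJ, hS,
      Matrix.add_mul, Matrix.mul_add, Matrix.one_mul, Matrix.mul_one, smul_mul, Matrix.mul_smul,
      Matrix.mul_neg, Matrix.mul_assoc, smul_neg, sub_neg_eq_add]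
  have hB : IsUnit (1 + c • (J * S)) := by
    rwa [isUnit_iff_isUnit_det, det_one_add_smul_mul_of_skew hJ hS]
  set w := Aᵀ⁻¹ *ᵥ v
  have hw : Aᵀ *ᵥ w = v := by
    rw [mulVec_mulVec, mul_nonsing_inv _ (by rwa [det_transpose]), one_mulVec]
  have huw : u = J *ᵥ w :=
    mulVec_injective_of_isUnit hB (by rw [hu, mulVec_mulVec, hBJ, ← mulVec_mulVec, hw])
  rw [dotProduct_mulVec, ← mulVec_transpose, transpose_nonsing_inv, dotProduct_mulVec,
    ← mulVec_transpose, hJ, neg_mulVec, ← huw, neg_dotProduct, dotProduct_comm]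

end Matrix

section Kahan

open MvPolynomial

variable {ι : Type*} [Fintype ι] [DecidableEq ι] {J : Matrix ι ι ℝ} {p : MvPolynomial ι ℝ}
  {ε : ℝ} {x y u : ι → ℝ}

/-- Equivalently `x = y - ε (I + (ε/2) f'(y))⁻¹ f(y)`: the Kahan map is reversible. -/
theorem kahan_reverse (hp : p.totalDegree ≤ 3)
    (hu : (1 - (ε / 2) • (J * hessian p x)) *ᵥ u = J *ᵥ grad p x) (hy : y - x = ε • u) :
    (1 + (ε / 2) • (J * hessian p y)) *ᵥ u = J *ᵥ grad p y := by
  have htrap := congrArg (J *ᵥ ·) (grad_sub_grad x y hp)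
  rw [hy] at htrap
  simp only [mulVec_sub, mulVec_smul, mulVec_add, add_mulVec, sub_mulVec, one_mulVec,
    smul_mulVec, mulVec_mulVec] at hu htrap ⊢
  linear_combination (norm := module) hu - htrap

theorem kahan_increment_eq (hp : p.totalDegree ≤ 3)
    (hu : (1 - (ε / 2) • (J * hessian p x)) *ᵥ u = J *ᵥ grad p x) (hy : y - x = ε • u) :
    u = J *ᵥ ((2 : ℝ) • grad p (midpoint ℝ x y) - (1 / 2 : ℝ) • (grad p x + grad p y)) := by
  have hmid := congrArg (J *ᵥ ·) (four_smul_grad_midpoint x y hp)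
  rw [hy] at hmid
  simp only [mulVec_sub, mulVec_smul, mulVec_add, sub_mulVec, one_mulVec,
    smul_mulVec, mulVec_mulVec] at hu hmid ⊢
  linear_combination (norm := module) hu - (1 / 2 : ℝ) • hmid

theorem kahan_integral_eq (hJ : Jᵀ = -J) (hp : p.totalDegree ≤ 3)
    (hu : (1 - (ε / 2) • (J * hessian p x)) *ᵥ u = J *ᵥ grad p x) (hy : y - x = ε • u)
    (hdet : IsUnit (1 - (ε / 2) • (J * hessian p y)).det) :
    eval y p + ε / 3 * (grad p y ⬝ᵥ ((1 - (ε / 2) • (J * hessian p y))⁻¹ *ᵥ (J *ᵥ grad p y))) =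
      eval x p + ε / 3 * (grad p x ⬝ᵥ u) := by
  have hback := dotProduct_inv_one_sub_smul_mul_mulVec hJ (hessian_transpose p y) hdet
    (kahan_reverse hp hu hy)
  have horth := dotProduct_mulVec_self_of_skew hJ
    ((2 : ℝ) • grad p (midpoint ℝ x y) - (1 / 2 : ℝ) • (grad p x + grad p y))
  rw [← kahan_increment_eq hp hu hy] at horth
  have hsimpson := simpson_rule x y hp
  rw [hy] at hsimpson
  simp only [dotProduct_smul, smul_dotProduct, add_dotProduct, sub_dotProduct, smul_eq_mul]
    at horth hsimpson
  rw [hback]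
  linear_combination hsimpson + (ε / 3) * horth

end Kahan

/-- The Celledoni–McLachlan–Owren–Quispel integral
`H̃(x,ε) = H(x) + (ε/3) ∇H(x)ᵀ (I − (ε/2)f'(x))⁻¹ f(x)`
is conserved by the Kahan map of a cubic Hamiltonian vector field `f = J∇H`. -/
theorem kahan_CMOQ_integral {n : ℕ}
    (J : Matrix (Fin n) (Fin n) ℝ) (hJ : Jᵀ = -J)
    (p : MvPolynomial (Fin n) ℝ) (hp : p.totalDegree ≤ 3)
    (H : (Fin n → ℝ) → ℝ) (hH : ∀ x, H x = MvPolynomial.eval x p)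
    (g : (Fin n → ℝ) → (Fin n → ℝ)) (hg : ∀ x v, fderiv ℝ H x v = g x ⬝ᵥ v)
    (f : (Fin n → ℝ) → (Fin n → ℝ)) (hf : ∀ x, f x = J.mulVec (g x))
    (M : (Fin n → ℝ) → Matrix (Fin n) (Fin n) ℝ)
    (hM : ∀ x v, (M x).mulVec v = fderiv ℝ f x v)
    (ε : ℝ)
    (Φ : (Fin n → ℝ) → (Fin n → ℝ))
    (hΦ : ∀ x, Φ x = x + ε • ((1 - (ε / 2) • M x)⁻¹.mulVec (f x)))
    (Htil : (Fin n → ℝ) → ℝ)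
    (hHtil : ∀ x, Htil x =
      H x + (ε / 3) * (g x ⬝ᵥ ((1 - (ε / 2) • M x)⁻¹.mulVec (f x))))
    (x : Fin n → ℝ)
    (hx : IsUnit (1 - (ε / 2) • M x).det)
    (hΦx : IsUnit (1 - (ε / 2) • M (Φ x)).det) :
    Htil (Φ x) = Htil x := by
  obtain rfl : H = fun y => MvPolynomial.eval y p := funext hH
  obtain rfl : g = MvPolynomial.grad p := funext fun z => funext fun j => by
    simpa [MvPolynomial.fderiv_eval_apply] using (hg z (Pi.single j 1)).symm
  obtain rfl : f = fun z => J *ᵥ MvPolynomial.grad p z := funext hf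
  obtain rfl : M = fun z => J * MvPolynomial.hessian p z := funext fun z =>
    ext_iff_mulVec.2 fun v => by rw [hM, MvPolynomial.fderiv_mulVec_grad_apply, mulVec_mulVec]
  rw [hHtil, hHtil]
  refine kahan_integral_eq hJ hp ?_ (by rw [hΦ x, add_sub_cancel_left]) hΦx
  rw [mulVec_mulVec, mul_nonsing_inv _ hx, one_mulVec]
end

section
/- For the planar cubic Hamiltonian H(x,y) = (1/3)a₁x³ + a₂x²y + a₃xy² + (1/3)a₄y³ + a₅x² + 2a₆xy + a₇y² + a₈x + a₉y, the Kahan discretization of the Hamiltonian vector field (ẋ,ẏ) = (H_y, −H_x) is the birational map x̃ = R(x,y)/D(x,y), ỹ = S(x,y)/D(x,y), where R, S, D are the explicit quadratic polynomials with coefficients r₁ = εa₂ + ε²(a₂a₆ − a₃a₅), r₂ = 2εa₃ + ε²(a₂a₇ − a₄a₅), r₃ = εa₄ + ε²(a₃a₇ − a₄a₆), r₄ = 1 + 2εa₆ + ε²(a₆² − a₅a₇ − a₃a₈ + a₂a₉), r₅ = 2εa₇ + ε²(a₃a₉ − a₄a₈), r₆ = εa₉ + ε²(a₆a₉ − a₇a₈);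 s₁ = −εa₁ + ε²(a₂a₅ − a₁a₆), s₂ = −2εa₂ + ε²(a₃a₅ − a₁a₇), s₃ = −εa₃ + ε²(a₃a₆ − a₂a₇), s₄ = −2εa₅ + ε²(a₂a₈ − a₁a₉), s₅ = 1 − 2εa₆ + ε²(a₆² − a₅a₇ + a₃a₈ − a₂a₉), s₆ = −εa₈ + ε²(a₆a₈ − a₅a₉); d₁ = ε²(a₁a₃ − a₂²), d₂ = ε²(a₁a₄ − a₂a₃), d₃ = ε²(a₂a₄ − a₃²), d₄ = ε²(a₁a₇ − 2a₂a₆ + a₃a₅), d₅ = ε²(a₄a₅ − 2a₃a₆ + a₂a₇), d₆ = 1 + ε²(a₅a₇ − a₆²). That is, (x̃,ỹ) so defined satisfies the implicit Kahan equations (x̃−x)/ε = a₂x̃x + a₃(x̃y + xỹ) + a₄ỹy + a₆(x̃+x) + a₇(ỹ+y) + a₉ and (ỹ−y)/ε = −a₁x̃x − a₂(x̃y + xỹ) − a₃ỹy − a₅(x̃+x) − a₆(ỹ+y) − a₈, whenever D(x,y) ≠ 0. -/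
/-- The planar Kahan map `x̃ = R/D`, `ỹ = S/D` with the explicit quadratic polynomials
`R`, `S`, `D` of Appendix A satisfies the implicit Kahan equations. -/
theorem kahan_planar_explicit_map (a1 a2 a3 a4 a5 a6 a7 a8 a9 ε x y : ℝ) (hε : ε ≠ 0)
    (R S D xt yt : ℝ)
    (hR : R = (ε*a2 + ε^2*(a2*a6 - a3*a5))*x^2 + (2*ε*a3 + ε^2*(a2*a7 - a4*a5))*x*y
      + (ε*a4 + ε^2*(a3*a7 - a4*a6))*y^2
      + (1 + 2*ε*a6 + ε^2*(a6^2 - a5*a7 - a3*a8 + a2*a9))*x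
      + (2*ε*a7 + ε^2*(a3*a9 - a4*a8))*y + (ε*a9 + ε^2*(a6*a9 - a7*a8)))
    (hS : S = (-(ε*a1) + ε^2*(a2*a5 - a1*a6))*x^2 + (-(2*ε*a2) + ε^2*(a3*a5 - a1*a7))*x*y
      + (-(ε*a3) + ε^2*(a3*a6 - a2*a7))*y^2
      + (-(2*ε*a5) + ε^2*(a2*a8 - a1*a9))*x
      + (1 - 2*ε*a6 + ε^2*(a6^2 - a5*a7 + a3*a8 - a2*a9))*y
      + (-(ε*a8) + ε^2*(a6*a8 - a5*a9)))
    (hD : D = ε^2*(a1*a3 - a2^2)*x^2 + ε^2*(a1*a4 - a2*a3)*x*y + ε^2*(a2*a4 - a3^2)*y^2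
      + ε^2*(a1*a7 - 2*a2*a6 + a3*a5)*x + ε^2*(a4*a5 - 2*a3*a6 + a2*a7)*y
      + (1 + ε^2*(a5*a7 - a6^2)))
    (hDne : D ≠ 0)
    (hxt : xt = R / D) (hyt : yt = S / D) :
    (xt - x)/ε = a2*xt*x + a3*(xt*y + x*yt) + a4*yt*y + a6*(xt + x) + a7*(yt + y) + a9 ∧
    (yt - y)/ε = -(a1*xt*x) - a2*(xt*y + x*yt) - a3*yt*y - a5*(xt + x) - a6*(yt + y) - a8 := by
  subst hR hS hD
  have hx : xt * (ε^2*(a1*a3 - a2^2)*x^2 + ε^2*(a1*a4 - a2*a3)*x*y + ε^2*(a2*a4 - a3^2)*y^2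
      + ε^2*(a1*a7 - 2*a2*a6 + a3*a5)*x + ε^2*(a4*a5 - 2*a3*a6 + a2*a7)*y
      + (1 + ε^2*(a5*a7 - a6^2)))
      = ((ε*a2 + ε^2*(a2*a6 - a3*a5))*x^2 + (2*ε*a3 + ε^2*(a2*a7 - a4*a5))*x*y
      + (ε*a4 + ε^2*(a3*a7 - a4*a6))*y^2
      + (1 + 2*ε*a6 + ε^2*(a6^2 - a5*a7 - a3*a8 + a2*a9))*x
      + (2*ε*a7 + ε^2*(a3*a9 - a4*a8))*y + (ε*a9 + ε^2*(a6*a9 - a7*a8))) := by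
    rw [hxt, div_mul_cancel₀ _ hDne]
  have hy : yt * (ε^2*(a1*a3 - a2^2)*x^2 + ε^2*(a1*a4 - a2*a3)*x*y + ε^2*(a2*a4 - a3^2)*y^2
      + ε^2*(a1*a7 - 2*a2*a6 + a3*a5)*x + ε^2*(a4*a5 - 2*a3*a6 + a2*a7)*y
      + (1 + ε^2*(a5*a7 - a6^2)))
      = ((-(ε*a1) + ε^2*(a2*a5 - a1*a6))*x^2 + (-(2*ε*a2) + ε^2*(a3*a5 - a1*a7))*x*y
      + (-(ε*a3) + ε^2*(a3*a6 - a2*a7))*y^2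
      + (-(2*ε*a5) + ε^2*(a2*a8 - a1*a9))*x
      + (1 - 2*ε*a6 + ε^2*(a6^2 - a5*a7 + a3*a8 - a2*a9))*y
      + (-(ε*a8) + ε^2*(a6*a8 - a5*a9))) := by
    rw [hyt, div_mul_cancel₀ _ hDne]
  constructor
  · rw [div_eq_iff hε]
    apply mul_right_cancel₀ hDne
    linear_combination (1 - ε*(a2*x + a3*y + a6)) * hx - ε*(a3*x + a4*y + a7) * hy
  · rw [div_eq_iff hε]
    apply mul_right_cancel₀ hDne
    linear_combination (1 + ε*(a2*x + a3*y + a6)) * hy + ε*(a1*x + a2*y + a5) * hx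
end

section
/- Let E be the affine cubic curve u₁x³ + u₂x²y + u₃xy² + u₄y³ + u₅x² + u₆xy + u₇y² + u₈x + u₉y + u₁₀ = 0, and let P₁ = (x₁,y₁), P₂ = (x₂,y₂) be points on E with x₁ ≠ x₂. Set ν = (y₂−y₁)/(x₂−x₁), β = y₁ − νx₁, and suppose u₄ν³ + u₃ν² + u₂ν + u₁ ≠ 0. Define γ = ((3u₄β+u₇)ν² + (2u₃β+u₆)ν + u₂β + u₅)/(u₄ν³+u₃ν²+u₂ν+u₁) and δ = (u₇ν³ − (u₃β−u₆)ν² − (2u₂β−u₅)ν − 3u₁β)/(u₄ν³+u₃ν²+u₂ν+u₁). Then the point P₃ = (−(x₁+x₂+γ), −(y₁+y₂+δ)) lies on E and on the line through P₁ and P₂. -/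
/-!
Substituting `y = ν x + β` into the cubic gives a cubic polynomial in `x` with leading
coefficient `A₃ = u₄ν³ + u₃ν² + u₂ν + u₁` and next coefficient `A₂ = γ A₃`. It vanishes at `x₁`
and `x₂`, so by Vieta its third root is `−(x₁ + x₂ + γ)`. The ordinate shift satisfies
`δ = νγ − 3β`, which is exactly what puts `P₃` on the line.
-/

section

variable {K : Type*} [Field K]

theorem cubic_eq_zero_at_third_root {a b c d x₁ x₂ : K} (ha : a ≠ 0) (hx : x₁ ≠ x₂)
    (h₁ : a * x₁ ^ 3 + b * x₁ ^ 2 + c * x₁ + d = 0)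
    (h₂ : a * x₂ ^ 3 + b * x₂ ^ 2 + c * x₂ + d = 0) :
    let x₃ := -(x₁ + x₂ + b / a)
    a * x₃ ^ 3 + b * x₃ ^ 2 + c * x₃ + d = 0 := by
  intro x₃
  have hb : a * (b / a) = b := mul_div_cancel₀ b ha
  -- `f - a (X - x₁)(X - x₂)(X - x₃)` has degree `≤ 1` and vanishes at `x₁`, `x₂`.
  have hscaled : (x₁ - x₂) * (a * x₃ ^ 3 + b * x₃ ^ 2 + c * x₃ + d) = 0 := by
    linear_combination (x₃ - x₂) * h₁ + (x₁ - x₃) * h₂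
      + (x₁ - x₂) * (x₂ - x₃) * (x₃ - x₁) * hb
  exact (mul_eq_zero.mp hscaled).resolve_left (sub_ne_zero.mpr hx)

theorem cubic_along_line (u1 u2 u3 u4 u5 u6 u7 u8 u9 u10 ν β x : K) :
    u1*x^3 + u2*x^2*(ν*x + β) + u3*x*(ν*x + β)^2 + u4*(ν*x + β)^3 + u5*x^2
      + u6*x*(ν*x + β) + u7*(ν*x + β)^2 + u8*x + u9*(ν*x + β) + u10
    = (u4*ν^3 + u3*ν^2 + u2*ν + u1) * x^3
      + ((3*u4*β + u7)*ν^2 + (2*u3*β + u6)*ν + u2*β + u5) * x^2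
      + (3*u4*ν*β^2 + u3*β^2 + 2*u7*ν*β + u6*β + u9*ν + u8) * x
      + (u4*β^3 + u7*β^2 + u9*β + u10) := by
  ring

theorem eq_slope_mul_add_intercept {x₁ y₁ x₂ y₂ : K} (hx : x₁ ≠ x₂) :
    let ν := (y₂ - y₁) / (x₂ - x₁)
    y₁ = ν * x₁ + (y₁ - ν * x₁) ∧ y₂ = ν * x₂ + (y₁ - ν * x₁) := by
  refine ⟨by ring, ?_⟩
  field_simp [sub_ne_zero.mpr hx.symm]
  ring

end

/-- Manin involution with respect to a finite point: the point
`P₃ = (−(x₁+x₂+γ), −(y₁+y₂+δ))` lies on the cubic and on the line through `P₁`, `P₂`. -/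
theorem manin_involution_finite
    (u1 u2 u3 u4 u5 u6 u7 u8 u9 u10 x1 y1 x2 y2 ν β γ δ : ℂ)
    (hP1 : u1*x1^3 + u2*x1^2*y1 + u3*x1*y1^2 + u4*y1^3 + u5*x1^2 + u6*x1*y1 + u7*y1^2
      + u8*x1 + u9*y1 + u10 = 0)
    (hP2 : u1*x2^3 + u2*x2^2*y2 + u3*x2*y2^2 + u4*y2^3 + u5*x2^2 + u6*x2*y2 + u7*y2^2
      + u8*x2 + u9*y2 + u10 = 0)
    (hx12 : x1 ≠ x2)
    (hν : ν = (y2 - y1) / (x2 - x1))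
    (hβ : β = y1 - ν*x1)
    (hden : u4*ν^3 + u3*ν^2 + u2*ν + u1 ≠ 0)
    (hγ : γ = ((3*u4*β + u7)*ν^2 + (2*u3*β + u6)*ν + u2*β + u5)
      / (u4*ν^3 + u3*ν^2 + u2*ν + u1))
    (hδ : δ = (u7*ν^3 - (u3*β - u6)*ν^2 - (2*u2*β - u5)*ν - 3*u1*β)
      / (u4*ν^3 + u3*ν^2 + u2*ν + u1))
    (x3 y3 : ℂ) (hx3 : x3 = -(x1 + x2 + γ)) (hy3 : y3 = -(y1 + y2 + δ)) :
    u1*x3^3 + u2*x3^2*y3 + u3*x3*y3^2 + u4*y3^3 + u5*x3^2 + u6*x3*y3 + u7*y3^2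
      + u8*x3 + u9*y3 + u10 = 0 ∧ y3 = ν*x3 + β := by
  obtain ⟨hy1, hy2⟩ : y1 = ν * x1 + β ∧ y2 = ν * x2 + β := by
    subst hν hβ; exact eq_slope_mul_add_intercept hx12
  have hδγ : δ = ν * γ - 3 * β := by
    rw [hδ, hγ, eq_sub_iff_add_eq, mul_div_assoc', div_add' _ _ _ hden, div_left_inj' hden]; ring
  have hline : y3 = ν * x3 + β := by
    rw [hy3, hx3, hy1, hy2, hδγ]; ring
  refine ⟨?_, hline⟩
  rw [hy1, cubic_along_line] at hP1
  rw [hy2, cubic_along_line] at hP2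
  rw [hline, cubic_along_line, hx3, hγ]
  exact cubic_eq_zero_at_third_root hden hx12 hP1 hP2
end

section
/- Let E be an elliptic curve with group law as above, with points F₁,F₂,F₃,B₁,…,B₆ on E satisfying F₁+F₂+F₃ = O and F₁ − B₁ = B₂ − F₂ = F₃ − B₃ = B₄ − F₁ = F₂ − B₅ = B₆ − F₃. Then B₂ + B₅ + (−2F₂) = O, B₁ + B₄ + (−2F₁) = O, and B₃ + B₆ + (−2F₃) = O; i.e., the line (BᵢBᵢ₊₃) passes through the second intersection point −2Fⱼ of the curve with its tangent at Fⱼ. -/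
/-- Corollary of Section 4: under the hexagon conditions, the line `(BᵢBᵢ₊₃)` passes
through the point `−2Fⱼ`, the second intersection of the curve with its tangent at `Fⱼ`
(three points collinear iff they sum to the neutral element of the group law). -/
theorem hexagon_long_diagonals_through_tangent_points {E : Type*} [AddCommGroup E]
    (F₁ F₂ F₃ B₁ B₂ B₃ B₄ B₅ B₆ : E)
    (hF : F₁ + F₂ + F₃ = 0)
    (h1 : F₁ - B₁ = B₂ - F₂) (h2 : B₂ - F₂ = F₃ - B₃) (h3 : F₃ - B₃ = B₄ - F₁)
    (h4 : B₄ - F₁ = F₂ - B₅) (h5 : F₂ - B₅ = B₆ - F₃) :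
    B₂ + B₅ + -(2 • F₂) = 0 ∧ B₁ + B₄ + -(2 • F₁) = 0 ∧ B₃ + B₆ + -(2 • F₃) = 0 := by
  have a : B₂ - F₂ = F₂ - B₅ := h2.trans (h3.trans h4)
  have b : F₁ - B₁ = B₄ - F₁ := h1.trans (h2.trans h3)
  have c : F₃ - B₃ = B₆ - F₃ := h3.trans (h4.trans h5)
  refine ⟨?_, ?_, ?_⟩
  · rw [two_smul, show B₂ + B₅ + -(F₂ + F₂) = (B₂ - F₂) - (F₂ - B₅) by abel, a, sub_self]
  · rw [two_smul, show B₁ + B₄ + -(F₁ + F₁) = (B₄ - F₁) - (F₁ - B₁) by abel, ← b, sub_self]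
  · rw [two_smul, show B₃ + B₆ + -(F₃ + F₃) = (B₆ - F₃) - (F₃ - B₃) by abel, ← c, sub_self]
end

section
/- Let six lines in the plane be given by y = μ₃x + b₁, y = μ₁x + b₂, y = μ₂x + b₃, y = μ₃x + b₄, y = μ₁x + b₅, y = μ₂x + b₆ with μ₁, μ₂, μ₃ pairwise distinct, and let B₁,…,B₆ be the consecutive intersection points (B₁ = line₆ ∩ line₁, B₂ = line₁ ∩ line₂, etc., e.g. B₁ = ((b₁−b₆)/(μ₂−μ₃), (μ₂b₁−μ₃b₆)/(μ₂−μ₃))). Then the six points B₁,…,B₆ lie on a common conic d₁x² + d₂xy + d₃y² + d₄x + d₅y + d₆ = 0 with (d₁,…,d₆) not all zero. -/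
/-- A hexagon with three pairs of parallel opposite sides is inscribed in a conic:
the six pairwise intersection points of the consecutive lines
`y = μ₃x+b₁, y = μ₁x+b₂, y = μ₂x+b₃, y = μ₃x+b₄, y = μ₁x+b₅, y = μ₂x+b₆`
lie on a common nontrivial conic. -/
theorem parallel_hexagon_inscribed_in_conic {K : Type*} [Field K] [CharZero K]
    (μ₁ μ₂ μ₃ b₁ b₂ b₃ b₄ b₅ b₆ : K)
    (h12 : μ₁ ≠ μ₂) (h13 : μ₁ ≠ μ₃) (h23 : μ₂ ≠ μ₃)
    (B₁ B₂ B₃ B₄ B₅ B₆ : K × K)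
    (hB₁ : B₁.2 = μ₂ * B₁.1 + b₆ ∧ B₁.2 = μ₃ * B₁.1 + b₁)
    (hB₂ : B₂.2 = μ₃ * B₂.1 + b₁ ∧ B₂.2 = μ₁ * B₂.1 + b₂)
    (hB₃ : B₃.2 = μ₁ * B₃.1 + b₂ ∧ B₃.2 = μ₂ * B₃.1 + b₃)
    (hB₄ : B₄.2 = μ₂ * B₄.1 + b₃ ∧ B₄.2 = μ₃ * B₄.1 + b₄)
    (hB₅ : B₅.2 = μ₃ * B₅.1 + b₄ ∧ B₅.2 = μ₁ * B₅.1 + b₅)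
    (hB₆ : B₆.2 = μ₁ * B₆.1 + b₅ ∧ B₆.2 = μ₂ * B₆.1 + b₆) :
    ∃ d₁ d₂ d₃ d₄ d₅ d₆ : K,
      ¬(d₁ = 0 ∧ d₂ = 0 ∧ d₃ = 0 ∧ d₄ = 0 ∧ d₅ = 0 ∧ d₆ = 0) ∧
      ∀ P ∈ ({B₁, B₂, B₃, B₄, B₅, B₆} : Set (K × K)),
        d₁*P.1^2 + d₂*P.1*P.2 + d₃*P.2^2 + d₄*P.1 + d₅*P.2 + d₆ = 0 := by
  by_cases hdeg : b₄ = b₁ ∧ b₅ = b₂ ∧ b₆ = b₃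
  · -- degenerate case: opposite lines coincide, use the product of two lines
    obtain ⟨e4, e5, e6⟩ := hdeg
    refine ⟨μ₁*μ₃, -(μ₁+μ₃), 1, μ₃*b₂+μ₁*b₁, -(b₁+b₂), b₁*b₂, ?_, ?_⟩
    · rintro ⟨-, -, h, -⟩; exact one_ne_zero h
    · rintro P (rfl | rfl | rfl | rfl | rfl | rfl)
      · linear_combination (P.2 - μ₁*P.1 - b₂) * hB₁.2
      · linear_combination (P.2 - μ₁*P.1 - b₂) * hB₂.1
      · linear_combination (P.2 - μ₃*P.1 - b₁) * hB₃.1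
      · linear_combination (P.2 - μ₁*P.1 - b₂) * hB₄.2
          + (P.2 - μ₁*P.1 - b₂) * e4
      · linear_combination (P.2 - μ₃*P.1 - b₁) * hB₅.2
          + (P.2 - μ₃*P.1 - b₁) * e5
      · linear_combination (P.2 - μ₃*P.1 - b₁) * hB₆.1
          + (P.2 - μ₃*P.1 - b₁) * e5
  · -- main case: the conic L₁L₃L₅ - L₂L₄L₆ (cubic terms cancel by parallelism)
    refine ⟨μ₂*μ₃*(b₂-b₅) + μ₁*μ₃*(b₆-b₃) + μ₁*μ₂*(b₄-b₁),
        μ₃*(b₅-b₆+b₃-b₂) + μ₂*(b₅-b₄-b₂+b₁) + μ₁*(b₃-b₆-b₄+b₁),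
        (b₆-b₃) + (b₄-b₁) + (b₂-b₅),
        μ₃*(b₂*b₆-b₃*b₅) + μ₂*(b₂*b₄-b₁*b₅) + μ₁*(b₄*b₆-b₁*b₃),
        b₃*b₅ + b₁*b₅ + b₁*b₃ - b₄*b₆ - b₂*b₆ - b₂*b₄,
        b₂*b₄*b₆ - b₁*b₃*b₅, ?_, ?_⟩
    · rintro ⟨h1, h2, h3, -, -, -⟩
      apply hdeg
      have hr : (b₂-b₅) * ((μ₁-μ₂)*(μ₁-μ₃)) = 0 := by
        linear_combination h1 + μ₁*h2 + μ₁^2*h3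
      have ht : (b₆-b₃) * ((μ₂-μ₁)*(μ₂-μ₃)) = 0 := by
        linear_combination h1 + μ₂*h2 + μ₂^2*h3
      have hs : (b₄-b₁) * ((μ₃-μ₁)*(μ₃-μ₂)) = 0 := by
        linear_combination h1 + μ₃*h2 + μ₃^2*h3
      have hr0 : b₂ - b₅ = 0 := by
        rcases mul_eq_zero.1 hr with h | h
        · exact h
        · exact absurd h (mul_ne_zero (sub_ne_zero.2 h12) (sub_ne_zero.2 h13))
      have ht0 : b₆ - b₃ = 0 := by
        rcases mul_eq_zero.1 ht with h | h
        · exact h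
        · exact absurd h (mul_ne_zero (sub_ne_zero.2 (Ne.symm h12))
            (sub_ne_zero.2 h23))
      have hs0 : b₄ - b₁ = 0 := by
        rcases mul_eq_zero.1 hs with h | h
        · exact h
        · exact absurd h (mul_ne_zero (sub_ne_zero.2 (Ne.symm h13))
            (sub_ne_zero.2 (Ne.symm h23)))
      exact ⟨sub_eq_zero.1 hs0, (sub_eq_zero.1 hr0).symm, sub_eq_zero.1 ht0⟩
    · rintro P (rfl | rfl | rfl | rfl | rfl | rfl)
      · linear_combination ((P.2-μ₂*P.1-b₃)*(P.2-μ₁*P.1-b₅)) * hB₁.2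
          - ((P.2-μ₁*P.1-b₂)*(P.2-μ₃*P.1-b₄)) * hB₁.1
      · linear_combination ((P.2-μ₂*P.1-b₃)*(P.2-μ₁*P.1-b₅)) * hB₂.1
          - ((P.2-μ₃*P.1-b₄)*(P.2-μ₂*P.1-b₆)) * hB₂.2
      · linear_combination ((P.2-μ₃*P.1-b₁)*(P.2-μ₁*P.1-b₅)) * hB₃.2
          - ((P.2-μ₃*P.1-b₄)*(P.2-μ₂*P.1-b₆)) * hB₃.1
      · linear_combination ((P.2-μ₃*P.1-b₁)*(P.2-μ₁*P.1-b₅)) * hB₄.1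
          - ((P.2-μ₁*P.1-b₂)*(P.2-μ₂*P.1-b₆)) * hB₄.2
      · linear_combination ((P.2-μ₃*P.1-b₁)*(P.2-μ₂*P.1-b₃)) * hB₅.2
          - ((P.2-μ₁*P.1-b₂)*(P.2-μ₂*P.1-b₆)) * hB₅.1
      · linear_combination ((P.2-μ₃*P.1-b₁)*(P.2-μ₂*P.1-b₃)) * hB₆.1
          - ((P.2-μ₁*P.1-b₂)*(P.2-μ₃*P.1-b₄)) * hB₆.2
end

section
/- For a quadratic vector field f on ℝⁿ, if x̃ = Φ_f(x,ε) satisfies the implicit Kahan equation (x̃ − x)/ε = Q(x,x̃) + (1/2)B(x+x̃) + c, then x = Φ_f(x̃,−ε), i.e. (x − x̃)/(−ε) = Q(x̃,x) + (1/2)B(x̃+x) + c; consequently Φ_f(·,ε) is injective on its domain and birational (its inverse is Φ_f(·,−ε)). -/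
/-- The symmetric bilinear polarization `Q(x,y) = (1/2)(Q(x+y) - Q(x) - Q(y))`. -/
noncomputable def kahanBilin {n : ℕ} (Q : (Fin n → ℝ) → (Fin n → ℝ)) (x y : Fin n → ℝ) :
    Fin n → ℝ :=
  (1 / 2 : ℝ) • (Q (x + y) - Q x - Q y)

/-- The implicit Kahan equation `(x̃ - x)/ε = Q(x,x̃) + (1/2)B(x+x̃) + c`. -/
def KahanEq {n : ℕ} (Q : (Fin n → ℝ) → (Fin n → ℝ))
    (B : Matrix (Fin n) (Fin n) ℝ) (c : Fin n → ℝ) (ε : ℝ) (x x' : Fin n → ℝ) : Prop :=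
  (1 / ε) • (x' - x) = kahanBilin Q x x' + (1 / 2 : ℝ) • B.mulVec (x + x') + c

/-- If `x̃ = Φ_f(x,ε)` satisfies the implicit Kahan equation, then `x = Φ_f(x̃,−ε)`;
consequently `Φ_f(·,ε)` is injective, with inverse `Φ_f(·,−ε)`. -/
theorem kahan_reverse_and_injective {n : ℕ} (Q : (Fin n → ℝ) → (Fin n → ℝ))
    (hQ : ∃ Bl : (Fin n → ℝ) →ₗ[ℝ] (Fin n → ℝ) →ₗ[ℝ] (Fin n → ℝ), ∀ x, Q x = Bl x x)
    (B : Matrix (Fin n) (Fin n) ℝ) (c : Fin n → ℝ)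
    (Φ : (Fin n → ℝ) → ℝ → (Fin n → ℝ)) (ε : ℝ) (hε : ε ≠ 0)
    (hΦ : ∀ (e : ℝ) (x : Fin n → ℝ), e ≠ 0 → KahanEq Q B c e x (Φ x e))
    (huniq : ∀ (e : ℝ) (x y y' : Fin n → ℝ), e ≠ 0 →
      KahanEq Q B c e x y → KahanEq Q B c e x y' → y = y') :
    (∀ x x' : Fin n → ℝ, KahanEq Q B c ε x x' → KahanEq Q B c (-ε) x' x) ∧
      (∀ x : Fin n → ℝ, Φ (Φ x ε) (-ε) = x) ∧
      Function.Injective (fun x => Φ x ε) := by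
  have hrev : ∀ x x' : Fin n → ℝ, KahanEq Q B c ε x x' → KahanEq Q B c (-ε) x' x := by
    intro x x' h
    unfold KahanEq kahanBilin at h ⊢
    rw [add_comm x' x]
    rw [show (1 / (-ε)) • (x - x') = (1 / ε) • (x' - x) by
      rw [one_div, one_div, inv_neg, neg_smul, ← smul_neg, neg_sub]]
    rw [h]
    congr 2
    rw [sub_right_comm]
  have hneg : -ε ≠ 0 := neg_ne_zero.mpr hε
  have hinv : ∀ x : Fin n → ℝ, Φ (Φ x ε) (-ε) = x := by
    intro x
    exact huniq (-ε) (Φ x ε) _ x hneg (hΦ (-ε) (Φ x ε) hneg) (hrev x (Φ x ε) (hΦ ε x hε))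
  refine ⟨hrev, hinv, fun x y hxy => ?_⟩
  simp only at hxy
  rw [← hinv x, ← hinv y, hxy]
end
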